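/- Let (a,b) ∈ {(3,0), (1,2)} ⊆ (ℤ/4ℤ)², i.e., θ = a + bw ∈ {3, 1+2w}, and R = R_θ, and let n ≥ 1. If C ⊆ Rⁿ is a self-dual linear code (C = C^⊥), then the all-(2+2w) vector (2+2w, 2+2w, …, 2+2w) belongs to C. -/

import Mathlib

open Polynomial

/-- The base ring ℤ/4ℤ. -/
abbrev Z4 := ZMod 4

/-- The polynomial X² − (a + bX) over ℤ/4ℤ. -/
noncomputable def wPoly (a b : Z4) : Z4[X] := X ^ 2 - (C b * X + C a)

/-- The ring R_{a+bw} = (ℤ/4ℤ)[X]/(X² − (a + bX)); every element is uniquely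
x₀ + x₁·w with x₀, x₁ ∈ ℤ/4ℤ, and w² = a + b·w. -/
abbrev Rw (a b : Z4) : Type := AdjoinRoot (wPoly a b)

/-- The element w of R_{a+bw}. -/
noncomputable def ww (a b : Z4) : Rw a b := AdjoinRoot.root _

/-!
When `a` is odd and `b` even (in particular for `θ ∈ {3, 1 + 2w}`) one has `2w³ = 2w`, and since
`x ↦ 2x²` is ℤ/4ℤ-linear this yields `(2 + 2w) x = 2(1 + w) x²` for every `x ∈ R`. Hence for a
codeword `y`, `⟨2 + 2w, y⟩ = 2(1 + w) ⟨y, y⟩ = 0` by self-duality, so the all-`(2 + 2w)` vector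
lies in `C^⊥ = C`.
-/

theorem const_mem_of_forall_mul_eq_mul_sq {R ι : Type*} [CommRing R] [Fintype ι]
    (C : Submodule R (ι → R)) (hsd : ∀ x : ι → R, x ∈ C ↔ ∀ y ∈ C, ∑ i, x i * y i = 0)
    {t s : R} (hts : ∀ x : R, t * x = s * x ^ 2) : (fun _ : ι => t) ∈ C := by
  refine (hsd _).mpr fun y hy => ?_
  have hyy : ∑ i, y i * y i = 0 := (hsd y).mp hy y hy
  simp only [hts, sq, ← Finset.mul_sum, hyy, mul_zero]

/-- Linear because the cross term `4 * x * y` vanishes and `2 * c ^ 2 = 2 * c` in `ZMod 4`. -/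
noncomputable def twoMulSq (A : Type*) [CommRing A] [Algebra (ZMod 4) A] :
    A →ₗ[ZMod 4] A where
  toFun x := 2 * x ^ 2
  map_add' x y := by
    have h4 : (4 : A) = 0 := by
      simpa using (map_ofNat (algebraMap (ZMod 4) A) 4).symm.trans (map_zero _)
    linear_combination (x * y) * h4
  map_smul' c x := by
    have hc : algebraMap (ZMod 4) A (2 * c ^ 2) = algebraMap (ZMod 4) A (2 * c) :=
      congrArg _ (by revert c; decide)
    simp only [map_mul, map_pow, map_ofNat] at hc
    simp only [Algebra.smul_def, RingHom.id_apply]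
    linear_combination x ^ 2 * hc

lemma wPoly_monic (a b : Z4) : (wPoly a b).Monic := by
  unfold wPoly
  exact monic_X_pow_sub (degree_linear_le.trans_lt (by exact_mod_cast Nat.one_lt_two))

lemma wPoly_natDegree (a b : Z4) : (wPoly a b).natDegree = 2 := by
  unfold wPoly
  compute_degree!

lemma ww_sq (a b : Z4) :
    ww a b ^ 2 = algebraMap Z4 (Rw a b) b * ww a b + algebraMap Z4 (Rw a b) a := by
  have h : aeval (ww a b) (X ^ 2 - (C b * X + C a)) = 0 := by
    change aeval (ww a b) (wPoly a b) = 0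
    rw [ww, AdjoinRoot.aeval_eq, AdjoinRoot.mk_self]
  simpa [sub_eq_zero, Algebra.smul_def] using h

lemma two_mul_ww_pow_three {a b : Z4} (ha : 2 * a = 2) (hb : 2 * b = 0) :
    2 * ww a b ^ 3 = 2 * ww a b := by
  have ha' := congrArg (algebraMap Z4 (Rw a b)) ha
  have hb' := congrArg (algebraMap Z4 (Rw a b)) hb
  simp only [map_mul, map_ofNat, map_zero] at ha' hb'
  linear_combination (2 * ww a b) * ww_sq a b + ww a b ^ 2 * hb' + ww a b * ha'

/-- Both sides are ℤ/4ℤ-linear in `x`, so it suffices to check them on the basis `1, w`. -/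
lemma two_add_two_mul_ww_mul {a b : Z4} (hw : 2 * ww a b ^ 3 = 2 * ww a b) (x : Rw a b) :
    (2 + 2 * ww a b) * x = (1 + ww a b) * 2 * x ^ 2 := by
  suffices LinearMap.mulLeft Z4 (2 + 2 * ww a b) =
      LinearMap.mulLeft Z4 (1 + ww a b) ∘ₗ twoMulSq (Rw a b) from
    (LinearMap.congr_fun this x).trans (mul_assoc (1 + ww a b) 2 (x ^ 2)).symm
  refine (AdjoinRoot.powerBasis' (wPoly_monic a b)).basis.ext fun i => ?_
  have hi : (i : ℕ) < 2 := wPoly_natDegree a b ▸ i.isLt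
  simp only [PowerBasis.coe_basis, AdjoinRoot.powerBasis'_gen, LinearMap.mulLeft_apply,
    LinearMap.comp_apply, twoMulSq, LinearMap.coe_mk, AddHom.coe_mk]
  change (2 + 2 * ww a b) * ww a b ^ (i : ℕ) = (1 + ww a b) * (2 * (ww a b ^ (i : ℕ)) ^ 2)
  interval_cases (i : ℕ)
  · ring
  · linear_combination -hw

theorem self_dual_contains_all_two_plus_two_w_general (a b : Z4)
    (hab : (a = 3 ∧ b = 0) ∨ (a = 1 ∧ b = 2))
    (n : ℕ) (C : Submodule (Rw a b) (Fin n → Rw a b))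
    (hsd : ∀ x : Fin n → Rw a b, x ∈ C ↔ ∀ y ∈ C, ∑ i, x i * y i = 0) :
    (fun _ : Fin n => 2 + 2 * ww a b) ∈ C := by
  obtain ⟨ha, hb⟩ : 2 * a = 2 ∧ 2 * b = 0 := by
    rcases hab with ⟨rfl, rfl⟩ | ⟨rfl, rfl⟩ <;> decide
  exact const_mem_of_forall_mul_eq_mul_sq C hsd
    (two_add_two_mul_ww_mul (two_mul_ww_pow_three ha hb))

/-- for θ = a + bw ∈ {3, 1+2w}, every self-dual linear code C ⊆ Rⁿ
contains the all-(2+2w) vector. -/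
theorem self_dual_contains_all_two_plus_two_w (a b : Z4)
    (hab : (a = 3 ∧ b = 0) ∨ (a = 1 ∧ b = 2))
    (n : ℕ) (hn : 1 ≤ n) (C : Submodule (Rw a b) (Fin n → Rw a b))
    (hsd : ∀ x : Fin n → Rw a b, x ∈ C ↔ ∀ y ∈ C, ∑ i, x i * y i = 0) :
    (fun _ : Fin n => 2 + 2 * ww a b) ∈ C :=
  self_dual_contains_all_two_plus_two_w_general a b hab n C hsd
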